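/- arXiv:2103.02516 — 6 statements merged into one kernel-verified Lean document; each statement's English description precedes it below -/
import Mathlib

section
/- Let G be a finite abelian group and c ∈ G a nontrivial element. Then the intersection of all subgroups G' ⊆ G such that G/G' is cyclic and c ∉ G' is the trivial subgroup. -/
/-!
If `g ≠ 1`, pick characters `φ, ψ : G →* ℂˣ` with `φ c ≠ 1` and `ψ g ≠ 1`; one of `φ`, `ψ`, `φ ψ`
is nontrivial on both `c` and `g`. Its kernel is a subgroup avoiding `c` with cyclic quotient
(a finite subgroup of `ℂˣ`) that avoids `g` as well.
-/

theorem MonoidHom.exists_apply_ne_one_and_apply_ne_one {M H : Type*} [MulOneClass M]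
    [CommGroup H] {φ ψ : M →* H} {a b : M} (ha : φ a ≠ 1) (hb : ψ b ≠ 1) :
    ∃ χ : M →* H, χ a ≠ 1 ∧ χ b ≠ 1 := by
  by_cases hφb : φ b = 1
  · by_cases hψa : ψ a = 1
    · exact ⟨φ * ψ, by simp [hψa, ha], by simp [hφb, hb]⟩
    · exact ⟨ψ, hψa, hb⟩
  · exact ⟨φ, ha, hφb⟩

theorem CommGroup.exists_apply_ne_one_and_apply_ne_one (G M : Type*) [CommGroup G] [Finite G]
    [CommMonoid M] [HasEnoughRootsOfUnity M (Monoid.exponent G)] {a b : G} (ha : a ≠ 1)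
    (hb : b ≠ 1) : ∃ χ : G →* Mˣ, χ a ≠ 1 ∧ χ b ≠ 1 :=
  have ⟨_, hφ⟩ := exists_apply_ne_one_of_hasEnoughRootsOfUnity G M ha
  have ⟨_, hψ⟩ := exists_apply_ne_one_of_hasEnoughRootsOfUnity G M hb
  MonoidHom.exists_apply_ne_one_and_apply_ne_one hφ hψ

theorem MonoidHom.isCyclic_quotient_ker {G R : Type*} [Group G] [Finite G] [CommRing R]
    [IsDomain R] (χ : G →* Rˣ) : IsCyclic (G ⧸ χ.ker) :=
  isCyclic_of_injective_ringHom ((Units.coeHom R).comp (QuotientGroup.kerLift χ))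
    (Units.val_injective.comp (QuotientGroup.kerLift_injective χ))

/-- Let `G` be a finite abelian group and `c ∈ G` a nontrivial element. Then the
intersection of all subgroups `G' ⊆ G` such that `G/G'` is cyclic and `c ∉ G'`
is the trivial subgroup. -/
theorem stmt_0 {G : Type*} [CommGroup G] [Fintype G] (c : G) (hc : c ≠ 1) :
    sInf {H : Subgroup G | IsCyclic (G ⧸ H) ∧ c ∉ H} = ⊥ := by
  refine (Subgroup.eq_bot_iff_forall _).2 fun g hg ↦ by_contra fun hg1 ↦ ?_
  obtain ⟨χ, hχc, hχg⟩ := CommGroup.exists_apply_ne_one_and_apply_ne_one G ℂ hc hg1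
  exact hχg (Subgroup.mem_sInf.1 hg χ.ker ⟨χ.isCyclic_quotient_ker, hχc⟩)
end

section
/- Let R be a commutative ring, Θ_H ∈ R/I for an ideal I of R, and Θ_L ∈ R a lift of an element of I. Define R_L = R[X]/(Θ̃_H·X − Θ_L, X·I, X², I²) where Θ̃_H is a lift of Θ_H. If for all r ∈ R with r·Θ_H = 0 in R/I one has r·Θ_L ∈ I², then the kernel of the structure map R → R_L is exactly I². -/
open Polynomial

/-!
Modulo `I²` and `X·I`, an element of the defining ideal of `R_L` is determined by its
coefficients of `1` and `X`, and these are congruent to a multiple `a·(-ΘL, ΘH)` of those of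
`ΘH·X - ΘL` modulo `I² × I`. For a constant `r` this says `a·ΘH ∈ I` and `r + a·ΘL ∈ I²`;
the hypothesis turns the first into `a·ΘL ∈ I²`, so `r ∈ I²`.
-/

namespace Polynomial

section

variable {R : Type*} [CommRing R] (I : Ideal R) {ΘL : R} (ΘH : R)

def linearRelIdeal (hΘL : ΘL ∈ I) : Ideal R[X] where
  carrier := {p | ∃ a : R, p.coeff 0 + a * ΘL ∈ I ^ 2 ∧ p.coeff 1 - a * ΘH ∈ I}
  zero_mem' := ⟨0, by simp, by simp⟩
  add_mem' := by
    rintro p q ⟨a, hp0, hp1⟩ ⟨b, hq0, hq1⟩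
    refine ⟨a + b, ?_, ?_⟩
    · convert add_mem hp0 hq0 using 1
      simp only [coeff_add]
      ring
    · convert add_mem hp1 hq1 using 1
      simp only [coeff_add]
      ring
  smul_mem' := by
    rintro q p ⟨a, hp0, hp1⟩
    have hp0I : p.coeff 0 ∈ I := by
      simpa using sub_mem (Ideal.pow_le_self two_ne_zero hp0) (I.mul_mem_left a hΘL)
    refine ⟨q.coeff 0 * a, ?_, ?_⟩
    · convert (I ^ 2).mul_mem_left (q.coeff 0) hp0 using 1
      simp only [smul_eq_mul, mul_coeff_zero]
      ring
    · convert add_mem (I.mul_mem_left (q.coeff 0) hp1) (I.mul_mem_left (q.coeff 1) hp0I) using 1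
      simp only [smul_eq_mul, mul_coeff_one]
      ring

variable {I ΘH}

theorem mem_linearRelIdeal {hΘL : ΘL ∈ I} {p : R[X]} :
    p ∈ linearRelIdeal I ΘH hΘL ↔
      ∃ a : R, p.coeff 0 + a * ΘL ∈ I ^ 2 ∧ p.coeff 1 - a * ΘH ∈ I :=
  Iff.rfl

theorem span_le_linearRelIdeal (hΘL : ΘL ∈ I) :
    Ideal.span ({C ΘH * X - C ΘL, X ^ 2} ∪ (fun t : R => X * C t) '' (I : Set R)
      ∪ C '' ((I ^ 2 : Ideal R) : Set R)) ≤ linearRelIdeal I ΘH hΘL := by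
  rw [Ideal.span_le]
  rintro p (((rfl | rfl) | ⟨t, ht, rfl⟩) | ⟨s, hs, rfl⟩) <;> rw [SetLike.mem_coe, mem_linearRelIdeal]
  · exact ⟨1, by simp, by simp⟩
  · exact ⟨0, by simp [coeff_X_pow], by simp [coeff_X_pow]⟩
  · exact ⟨0, by simp, by simpa using ht⟩
  · exact ⟨0, by simpa using hs, by simp⟩

theorem mem_sq_of_C_mem_linearRelIdeal {hΘL : ΘL ∈ I}
    (H : ∀ r : R, r * ΘH ∈ I → r * ΘL ∈ I ^ 2) {r : R} (hr : C r ∈ linearRelIdeal I ΘH hΘL) :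
    r ∈ I ^ 2 := by
  obtain ⟨a, h0, h1⟩ := mem_linearRelIdeal.mp hr
  have haH : a * ΘH ∈ I := by simpa using neg_mem h1
  simpa using sub_mem (show r + a * ΘL ∈ I ^ 2 by simpa using h0) (H a haH)

end

end Polynomial

/-- Let `R` be a commutative ring, `I` an ideal, `ΘL ∈ I`, and `ΘH ∈ R` (a lift of
`Θ_H ∈ R/I`).  Let `R_L = R[X]/(ΘH·X − ΘL, X·I, X², I²)`.  If for all `r ∈ R` with
`r·ΘH ≡ 0 mod I` one has `r·ΘL ∈ I²`, then the kernel of the structure map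
`R → R_L` is exactly `I²`. -/
theorem stmt_1 {R : Type*} [CommRing R] (I : Ideal R) (ΘL ΘH : R) (hΘL : ΘL ∈ I)
    (H : ∀ r : R, r * ΘH ∈ I → r * ΘL ∈ I ^ 2) :
    RingHom.ker ((Ideal.Quotient.mk (Ideal.span
        ({C ΘH * X - C ΘL, X ^ 2} ∪ (fun t : R => X * C t) '' (I : Set R)
          ∪ C '' ((I ^ 2 : Ideal R) : Set R)))).comp (C : R →+* R[X])) = I ^ 2 := by
  ext r
  simp only [RingHom.mem_ker, RingHom.comp_apply, Ideal.Quotient.eq_zero_iff_mem]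
  constructor
  · exact fun hr => mem_sq_of_C_mem_linearRelIdeal H (span_le_linearRelIdeal hΘL hr)
  · exact fun hr => Ideal.subset_span (Or.inr ⟨r, hr, rfl⟩)
end

section
/- Let u be an element of a field extension H of F such that the multiset of values {ord_P(σ(u)) : σ ∈ Gal(H/F)} pairs with a faithful character χ of the finite cyclic group G = Gal(H/F) to give a nonzero value L := Σ_σ ord_P(σ(u))χ(σ) ≠ 0. If τ ∈ G fixes u, then τ = 1; consequently H = F(u). -/
/-! If `τ` fixes `u`, reindexing the sum `L = Σ_σ ord(σ u) χ(σ)` by `σ ↦ σ τ` gives `L = L · χ(τ)`,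
so `L ≠ 0` forces `χ(τ) = 1` and faithfulness gives `τ = 1`. An element with trivial stabilizer
in a finite Galois group generates the extension, by the Galois correspondence. -/

open IntermediateField

theorem MonoidHom.map_eq_one_of_sum_mul_ne_zero {G R : Type*} [Group G] [Fintype G]
    [CommRing R] [IsDomain R] (χ : G →* R) (f : G → R) {τ : G}
    (hf : ∀ σ, f (σ * τ) = f σ) (hS : ∑ σ, f σ * χ σ ≠ 0) : χ τ = 1 := by
  have hshift : ∑ σ, f σ * χ σ = (∑ σ, f σ * χ σ) * χ τ :=
    calc ∑ σ, f σ * χ σ = ∑ σ, f (σ * τ) * χ (σ * τ) :=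
          (Fintype.sum_equiv (Equiv.mulRight τ) _ _ fun _ => rfl).symm
      _ = (∑ σ, f σ * χ σ) * χ τ := by
          simp only [hf, map_mul, Finset.sum_mul, mul_assoc]
  exact (mul_left_cancel₀ hS (by rw [mul_one]; exact hshift)).symm

theorem IsGalois.adjoin_simple_eq_top_of_forall_fix_eq_one {F E : Type*} [Field F] [Field E]
    [Algebra F E] [FiniteDimensional F E] [IsGalois F E] {u : E}
    (h : ∀ τ : E ≃ₐ[F] E, τ u = u → τ = 1) : F⟮u⟯ = ⊤ := by
  have hfix : F⟮u⟯.fixingSubgroup = ⊥ :=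
    eq_bot_iff.mpr fun τ hτ => h τ (hτ ⟨u, mem_adjoin_simple_self F u⟩)
  rw [← IsGalois.fixedField_fixingSubgroup F⟮u⟯, hfix, fixedField_bot]

/-- Let `H/F` be a finite Galois extension with group `G = Gal(H/F)`, `χ : G → ℂ*` a
faithful character, and `ord : H → ℤ` (e.g. `ord_P ∘ (· u)` valuations).  Suppose
`L := Σ_{σ ∈ G} ord(σ(u))·χ(σ) ≠ 0`.  Then any `τ ∈ G` fixing `u` is trivial, and
consequently `H = F(u)`. -/
theorem stmt_7 {F H : Type*} [Field F] [Field H] [Algebra F H]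
    [FiniteDimensional F H] [IsGalois F H]
    (χ : (H ≃ₐ[F] H) →* ℂˣ) (hχ : Function.Injective χ)
    (ord : H → ℤ) (u : H)
    (hL : ∑ σ : H ≃ₐ[F] H, (ord (σ u) : ℂ) * ((χ σ : ℂˣ) : ℂ) ≠ 0) :
    (∀ τ : H ≃ₐ[F] H, τ u = u → τ = 1) ∧
      IntermediateField.adjoin F {u} = ⊤ := by
  have hfix : ∀ τ : H ≃ₐ[F] H, τ u = u → τ = 1 := by
    intro τ hτ
    have hχτ : ((Units.coeHom ℂ).comp χ) τ = 1 :=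
      ((Units.coeHom ℂ).comp χ).map_eq_one_of_sum_mul_ne_zero (fun σ => (ord (σ u) : ℂ))
        (fun σ => by rw [AlgEquiv.mul_apply, hτ]) hL
    exact (map_eq_one_iff χ hχ).mp (Units.val_eq_one.mp hχτ)
  exact ⟨hfix, IsGalois.adjoin_simple_eq_top_of_forall_fix_eq_one hfix⟩
end

section
/- Let G be a finite group, M a G-module on which 2 acts invertibly, and suppose the conjugation action of a fixed element c ∈ G̃ (lifting complex conjugation) is inversion on M. Given a group extension 1 → M → G̃ → G → 1 and a set-theoretic lift σ ↦ σ̃, the function λ(σ̃) = (σ̃ c̃ σ̃⁻¹ c̃⁻¹)^{1/2} defines a 1-cocycle on G̃ with values in M. -/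
/-! `σ ↦ ⁅σ, c⁆` is a crossed homomorphism for the conjugation action
(`commutatorElement_mul_left_eq_conj_mul`). On an abelian normal subgroup with unique square
roots, squaring is injective and commutes with conjugation, so a square root of a crossed
homomorphism is again one. -/

open scoped commutatorElement

theorem map_mul_eq_mul_conj_of_sq_eq {G : Type*} [Group G] (M : Subgroup G) [M.Normal]
    (hcomm : ∀ a b : G, a ∈ M → b ∈ M → a * b = b * a)
    (hsq : ∀ a b : G, a ∈ M → b ∈ M → a ^ 2 = b ^ 2 → a = b)
    {k l : G → G} (hlM : ∀ σ, l σ ∈ M) (hl : ∀ σ, l σ ^ 2 = k σ)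
    (hk : ∀ σ τ, k (σ * τ) = σ * k τ * σ⁻¹ * k σ) (σ τ : G) :
    l (σ * τ) = l σ * (σ * l τ * σ⁻¹) := by
  have hconj : σ * l τ * σ⁻¹ ∈ M := ‹M.Normal›.conj_mem _ (hlM τ) σ
  have hcomm' : Commute (σ * l τ * σ⁻¹) (l σ) := hcomm _ _ hconj (hlM σ)
  refine hsq _ _ (hlM _) (M.mul_mem (hlM σ) hconj) ?_
  calc l (σ * τ) ^ 2 = σ * l τ ^ 2 * σ⁻¹ * l σ ^ 2 := by rw [hl, hl, hl, hk]
    _ = (σ * l τ * σ⁻¹ * l σ) ^ 2 := by rw [hcomm'.mul_pow, conj_pow]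
    _ = (l σ * (σ * l τ * σ⁻¹)) ^ 2 := by rw [hcomm'.eq]

theorem stmt_11_general {Gt : Type*} [Group Gt] (M : Subgroup Gt) [M.Normal]
    (hcomm : ∀ a b : Gt, a ∈ M → b ∈ M → a * b = b * a)
    (hsq : ∀ a b : Gt, a ∈ M → b ∈ M → a ^ 2 = b ^ 2 → a = b)
    (c : Gt)
    (l : Gt → Gt) (hlM : ∀ σ : Gt, l σ ∈ M)
    (hl : ∀ σ : Gt, (l σ) ^ 2 = σ * c * σ⁻¹ * c⁻¹) :
    ∀ σ τ : Gt, l (σ * τ) = l σ * (σ * l τ * σ⁻¹) :=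
  map_mul_eq_mul_conj_of_sq_eq M hcomm hsq (k := fun σ : Gt => ⁅σ, c⁆) hlM hl
    fun σ τ => commutatorElement_mul_left_eq_conj_mul σ τ c

/-- Let `G̃` be a group, `M ⊆ G̃` a normal abelian subgroup on which squaring is
injective ("2 acts invertibly"), and `c ∈ G̃` an element whose conjugation action
on `M` is inversion.  Assume all commutators `σ c σ⁻¹ c⁻¹` lie in `M` (as for a
group extension `1 → M → G̃ → G → 1` with `G̃` acting through `G`).  Then the
function `λ(σ) = (σ c σ⁻¹ c⁻¹)^{1/2}` is a 1-cocycle: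
`λ(στ) = λ(σ) · (σ·λ(τ)·σ⁻¹)`. -/
theorem stmt_11 {Gt : Type*} [Group Gt] (M : Subgroup Gt) [M.Normal]
    (hcomm : ∀ a b : Gt, a ∈ M → b ∈ M → a * b = b * a)
    (hsq : ∀ a b : Gt, a ∈ M → b ∈ M → a ^ 2 = b ^ 2 → a = b)
    (c : Gt) (hc : ∀ m ∈ M, c * m * c⁻¹ = m⁻¹)
    (hk : ∀ σ : Gt, σ * c * σ⁻¹ * c⁻¹ ∈ M)
    (l : Gt → Gt) (hlM : ∀ σ : Gt, l σ ∈ M)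
    (hl : ∀ σ : Gt, (l σ) ^ 2 = σ * c * σ⁻¹ * c⁻¹) :
    ∀ σ τ : Gt, l (σ * τ) = l σ * (σ * l τ * σ⁻¹) :=
  stmt_11_general M hcomm hsq c l hlM hl
end

section
/- Let R be a commutative ring, Θ_H, Θ'_H, Θ_L elements with Θ_L in an ideal I, Θ'_H ∈ R/I a non-zerodivisor dividing p^h, and define R_{X,m} = R[X]/(Θ_L − Θ̃'_H X, X², IX, I², p^m X). Then for m sufficiently large (depending on h and on the exponent annihilating I/I²), the kernel of R → R_{X,m} equals I². -/
/-!
Send `f ∈ R[X]` to `(f₀ mod I², f₁ mod I)`. This map is `R`-linear and carries the ideal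
`(ΘL − ΘH'·X, X², I·X, I², p^m·X)` into the `R`-span of `(ΘL, −ΘH')` and `(0, p^m)`, since
multiplying a generator of degree at most one with constant term in `I` by `a` only scales its
image by `a₀`. So if `r ∈ R` dies in `R_{X,m}`, then `r ≡ a·ΘL (mod I²)` with
`a·ΘH' ≡ b·p^m (mod I)`. Cancelling the non-zerodivisor `ΘH'` makes `a` divisible by
`p^(m-h)` modulo `I`, and `p^c·I ⊆ I²` then gives `a·ΘL ∈ I²`.
-/

open Polynomial

theorem Ideal.apply_mem_of_mem_span {A M : Type*} [CommSemiring A] [AddCommMonoid M]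
    (L : A →+ M) (N : AddSubmonoid M) {S : Set A} (hS : ∀ g ∈ S, ∀ a, L (a * g) ∈ N)
    {x : A} (hx : x ∈ Ideal.span S) : L x ∈ N := by
  suffices ∀ a, L (a * x) ∈ N by simpa using this 1
  induction hx using Submodule.span_induction with
  | mem g hg => exact hS g hg
  | zero => simp [N.zero_mem]
  | add x y _ _ hx hy => exact fun a ↦ by rw [mul_add, map_add]; exact N.add_mem (hx a) (hy a)
  | smul b x _ hx => exact fun a ↦ by rw [smul_eq_mul, ← mul_assoc]; exact hx (a * b)

theorem pow_sub_dvd_of_mul_eq_mul_pow {S : Type*} [CommRing S] {t x y n : S} {h m : ℕ}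
    (ht : t ∈ nonZeroDivisors S) (hdvd : t ∣ n ^ h) (hm : h ≤ m) (heq : x * t = y * n ^ m) :
    n ^ (m - h) ∣ x := by
  obtain ⟨q, hq⟩ := hdvd
  have hnm : n ^ m = t * (q * n ^ (m - h)) := by
    rw [← Nat.add_sub_cancel' hm, pow_add, hq, Nat.add_sub_cancel_left]; ring
  refine ⟨y * q, (mul_cancel_right_mem_nonZeroDivisors ht).1 ?_⟩
  rw [heq, hnm]; ring

theorem Ideal.mul_mem_sq_of_pow_dvd {R : Type*} [CommRing R] {I : Ideal R} {n : R} {c k : ℕ}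
    (hc : ∀ x ∈ I, n ^ c * x ∈ I ^ 2) (hk : c ≤ k) {a θ : R} (hθ : θ ∈ I)
    (ha : Ideal.Quotient.mk I n ^ k ∣ Ideal.Quotient.mk I a) : a * θ ∈ I ^ 2 := by
  obtain ⟨q, hq⟩ := ha
  obtain ⟨q, rfl⟩ := Ideal.Quotient.mk_surjective q
  have hdiff : a - n ^ k * q ∈ I := by
    rw [← Ideal.Quotient.eq_zero_iff_mem, map_sub, hq]; simp
  have hsplit : a * θ = (a - n ^ k * q) * θ + n ^ c * (n ^ (k - c) * q * θ) := by
    rw [← Nat.add_sub_cancel' hk, pow_add, Nat.add_sub_cancel_left]; ring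
  rw [hsplit]
  exact Ideal.add_mem _ (sq I ▸ Ideal.mul_mem_mul hdiff hθ) (hc _ (I.mul_mem_left _ hθ))

namespace Polynomial

variable {R : Type*} [CommRing R]

noncomputable def coeffZeroOneMod (J K : Ideal R) : R[X] →ₗ[R] (R ⧸ J) × (R ⧸ K) :=
  (J.mkQ ∘ₗ lcoeff R 0).prod (K.mkQ ∘ₗ lcoeff R 1)

@[simp]
theorem coeffZeroOneMod_apply (J K : Ideal R) (f : R[X]) :
    coeffZeroOneMod J K f = (Ideal.Quotient.mk J (f.coeff 0), Ideal.Quotient.mk K (f.coeff 1)) :=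
  rfl

theorem coeffZeroOneMod_mul_X_sq (J K : Ideal R) (a : R[X]) :
    coeffZeroOneMod J K (a * X ^ 2) = 0 := by
  simp [sq, ← mul_assoc, coeff_mul_X, mul_coeff_zero]

theorem coeffZeroOneMod_C_add_C_mul_X (J K : Ideal R) (u v : R) :
    coeffZeroOneMod J K (C u + C v * X) = (Ideal.Quotient.mk J u, Ideal.Quotient.mk K v) := by
  simp [coeff_C]

theorem coeffZeroOneMod_mul_C_add_C_mul_X (J K : Ideal R) {u : R} (hu : u ∈ K) (v : R)
    (a : R[X]) :
    coeffZeroOneMod J K (a * (C u + C v * X)) =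
      a.coeff 0 • coeffZeroOneMod J K (C u + C v * X) := by
  have hu' : Ideal.Quotient.mk K (a.coeff 1 * u) = 0 :=
    Ideal.Quotient.eq_zero_iff_mem.2 (K.mul_mem_left _ hu)
  simp [mul_add, ← mul_assoc, coeff_mul_X, coeff_mul_C, mul_coeff_zero, Algebra.smul_def,
    Ideal.Quotient.algebraMap_eq, hu', coeff_C]

end Polynomial

section

variable {R : Type*} [CommRing R] (p : ℕ) (I : Ideal R) (ΘL ΘH' : R) (m : ℕ)

abbrev relationSpan : Submodule R ((R ⧸ I ^ 2) × (R ⧸ I)) :=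
  Submodule.span R {(Ideal.Quotient.mk (I ^ 2) ΘL, -Ideal.Quotient.mk I ΘH'),
    (0, (p : R ⧸ I) ^ m)}

theorem coeffZeroOneMod_mem_relationSpan (hΘL : ΘL ∈ I) {f : R[X]}
    (hf : f ∈ Ideal.span ({C ΘL - C ΘH' * X, X ^ 2, (p : R[X]) ^ m * X}
            ∪ (fun t : R => X * C t) '' (I : Set R)
            ∪ C '' ((I ^ 2 : Ideal R) : Set R))) :
    coeffZeroOneMod (I ^ 2) I f ∈ relationSpan p I ΘL ΘH' m := by
  set N := relationSpan p I ΘL ΘH' m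
  have linear_mem {u v : R} (hu : u ∈ I)
      (hg : (Ideal.Quotient.mk (I ^ 2) u, Ideal.Quotient.mk I v) ∈ N) (a : R[X]) :
      coeffZeroOneMod (I ^ 2) I (a * (C u + C v * X)) ∈ N := by
    rw [coeffZeroOneMod_mul_C_add_C_mul_X _ _ hu, coeffZeroOneMod_C_add_C_mul_X]
    exact N.smul_mem _ hg
  refine Ideal.apply_mem_of_mem_span (coeffZeroOneMod (I ^ 2) I).toAddMonoidHom
    N.toAddSubmonoid ?_ hf
  intro g hg a
  simp only [LinearMap.toAddMonoidHom_coe, Submodule.mem_toAddSubmonoid]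
  rcases hg with ((hg | ⟨t, ht, rfl⟩) | ⟨s, hs, rfl⟩)
  · rcases hg with rfl | rfl | rfl
    · rw [show C ΘL - C ΘH' * X = C ΘL + C (-ΘH') * X by simp [sub_eq_add_neg]]
      exact linear_mem hΘL (Submodule.subset_span (by simp)) a
    · rw [coeffZeroOneMod_mul_X_sq]
      exact N.zero_mem
    · rw [show (p : R[X]) ^ m * X = C 0 + C ((p : R) ^ m) * X by simp]
      exact linear_mem I.zero_mem (Submodule.subset_span (by simp)) a
  · dsimp only
    rw [show X * C t = C 0 + C t * X by rw [map_zero, zero_add, mul_comm]]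
    refine linear_mem I.zero_mem ?_ a
    rw [map_zero, Ideal.Quotient.eq_zero_iff_mem.2 ht, Prod.mk_zero_zero]
    exact N.zero_mem
  · rw [show C s = C s + C 0 * X by simp]
    refine linear_mem (Ideal.pow_le_self two_ne_zero hs) ?_ a
    rw [map_zero, Ideal.Quotient.eq_zero_iff_mem.2 hs, Prod.mk_zero_zero]
    exact N.zero_mem

theorem mem_sq_of_mk_mem_relationSpan {c h : ℕ} (hc : ∀ x ∈ I, (p : R) ^ c * x ∈ I ^ 2)
    (hΘL : ΘL ∈ I) (hnzd : Ideal.Quotient.mk I ΘH' ∈ nonZeroDivisors (R ⧸ I))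
    (hdvd : Ideal.Quotient.mk I ΘH' ∣ (p : R ⧸ I) ^ h) (hm : h + c ≤ m) {r : R}
    (hr : (Ideal.Quotient.mk (I ^ 2) r, 0) ∈ relationSpan p I ΘL ΘH' m) : r ∈ I ^ 2 := by
  obtain ⟨a, b, hab⟩ := Submodule.mem_span_pair.1 hr
  rw [Prod.smul_mk, Prod.smul_mk, Prod.mk_add_mk, Prod.mk.injEq, smul_zero, add_zero] at hab
  obtain ⟨hr0, hr1⟩ := hab
  simp only [Algebra.smul_def, Ideal.Quotient.algebraMap_eq] at hr0 hr1
  have heq : Ideal.Quotient.mk I a * Ideal.Quotient.mk I ΘH' =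
      Ideal.Quotient.mk I b * (p : R ⧸ I) ^ m := by
    linear_combination -hr1
  have hpow : (p : R ⧸ I) ^ (m - h) ∣ Ideal.Quotient.mk I a :=
    pow_sub_dvd_of_mul_eq_mul_pow hnzd hdvd (by omega) heq
  have haΘL : a * ΘL ∈ I ^ 2 :=
    Ideal.mul_mem_sq_of_pow_dvd (k := m - h) hc (by omega) hΘL (by simpa using hpow)
  rw [← Ideal.Quotient.eq_zero_iff_mem, ← hr0, ← map_mul, Ideal.Quotient.eq_zero_iff_mem]
  exact haΘL

end

theorem stmt_14_general {R : Type*} [CommRing R] (p : ℕ)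
    (I : Ideal R) (c h : ℕ)
    (hc : ∀ x ∈ I, (p : R) ^ c * x ∈ I ^ 2)
    (ΘL ΘH' : R) (hΘL : ΘL ∈ I)
    (hnzd : Ideal.Quotient.mk I ΘH' ∈ nonZeroDivisors (R ⧸ I))
    (hdvd : Ideal.Quotient.mk I ΘH' ∣ (p : R ⧸ I) ^ h) :
    ∀ m : ℕ, h + c ≤ m →
      RingHom.ker ((Ideal.Quotient.mk (Ideal.span
          ({C ΘL - C ΘH' * X, X ^ 2, (p : R[X]) ^ m * X}
            ∪ (fun t : R => X * C t) '' (I : Set R)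
            ∪ C '' ((I ^ 2 : Ideal R) : Set R)))).comp (C : R →+* R[X])) =
        I ^ 2 := by
  intro m hm
  refine le_antisymm (fun r hr ↦ ?_) (fun r hr ↦ ?_)
  · rw [RingHom.mem_ker, RingHom.comp_apply, Ideal.Quotient.eq_zero_iff_mem] at hr
    have hC := coeffZeroOneMod_mem_relationSpan p I ΘL ΘH' m hΘL hr
    rw [coeffZeroOneMod_apply, coeff_C_zero, coeff_C_of_ne_zero one_ne_zero, map_zero] at hC
    exact mem_sq_of_mk_mem_relationSpan p I ΘL ΘH' m hc hΘL hnzd hdvd hm hC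
  · rw [RingHom.mem_ker, RingHom.comp_apply, Ideal.Quotient.eq_zero_iff_mem]
    exact Ideal.subset_span (Or.inr ⟨r, hr, rfl⟩)

/-- Let `R` be a commutative ring, `I` an ideal with `p^c·I ⊆ I²`, `ΘL ∈ I`, and
`ΘH'` a lift of a non-zerodivisor of `R/I` dividing `p^h` there.  Let
`R_{X,m} = R[X]/(ΘL − ΘH'·X, X², I·X, I², p^m·X)`.  Then for `m ≥ h + c`
the kernel of the structure map `R → R_{X,m}` equals `I²`. -/
theorem stmt_14 {R : Type*} [CommRing R] (p : ℕ) (hp : p.Prime)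
    (I : Ideal R) (c h : ℕ)
    (hc : ∀ x ∈ I, (p : R) ^ c * x ∈ I ^ 2)
    (ΘL ΘH' : R) (hΘL : ΘL ∈ I)
    (hnzd : Ideal.Quotient.mk I ΘH' ∈ nonZeroDivisors (R ⧸ I))
    (hdvd : Ideal.Quotient.mk I ΘH' ∣ (p : R ⧸ I) ^ h) :
    ∀ m : ℕ, h + c ≤ m →
      RingHom.ker ((Ideal.Quotient.mk (Ideal.span
          ({C ΘL - C ΘH' * X, X ^ 2, (p : R[X]) ^ m * X}
            ∪ (fun t : R => X * C t) '' (I : Set R)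
            ∪ C '' ((I ^ 2 : Ideal R) : Set R)))).comp (C : R →+* R[X])) =
        I ^ 2 :=
  stmt_14_general p I c h hc ΘL ΘH' hΘL hnzd hdvd
end

section
/- Let Λ = A ⊕ Ā where Ā = A/I_A for an ideal I_A of a commutative ring A, with λ = (0,1), and let J₀ = (I_A²·Λ, Θ_L − Θ_H·λ, p^m·Λ) where Θ_L ∈ I_A and Θ_H ∈ Ā. If a + λb ∈ J₀ with a, b ∈ A (b taken mod I_A), then in the ring A_L^# = A[𝓛]/(𝓛Θ_H^lift − Θ_L, 𝓛I_A, 𝓛², I_A²) we have a + b𝓛 ∈ (p^m). -/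
/-! `a + b𝓛` is the image of `(a, b mod I_A)` under the `A`-linear map `Λ → A_L^#`,
`(x, y) ↦ x + y𝓛`, well defined because `𝓛·I_A = 0`. This map kills `I_A²·Λ` (as
`I_A² = 0` in `A_L^#`) and `(Θ_L, −Θ_H)` (as `𝓛Θ_H = Θ_L`), and sends `p^m·Λ` into `(p^m)`. -/

open Polynomial

namespace Ideal

variable {A R : Type*} [CommRing A] [CommRing R] [Algebra A R] {I : Ideal A}

noncomputable def prodQuotientLift (ℓ : R) (hℓ : ∀ i ∈ I, i • ℓ = 0) :
    A × (A ⧸ I) →ₗ[A] R :=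
  (Algebra.linearMap A R).coprod
    (Submodule.liftQ I (LinearMap.toSpanSingleton A R ℓ) fun i hi => hℓ i hi)

theorem prodQuotientLift_apply_mk (ℓ : R) (hℓ : ∀ i ∈ I, i • ℓ = 0) (a b : A) :
    prodQuotientLift ℓ hℓ (a, Ideal.Quotient.mk I b) = algebraMap A R a + b • ℓ :=
  rfl

theorem smul_top_le_comap_map {M : Type*} [AddCommGroup M] [Module A M]
    (F : M →ₗ[A] R) (K : Ideal A) :
    K • (⊤ : Submodule A M) ≤ ((K.map (algebraMap A R)).restrictScalars A).comap F :=
  Submodule.smul_le.2 fun k hk v _ => by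
    simpa [Algebra.smul_def] using Ideal.mul_mem_right _ _ (Ideal.mem_map_of_mem _ hk)

theorem add_smul_mem_map_of_mem_sup {ℓ : R} (hℓ : ∀ i ∈ I, i • ℓ = 0)
    (hsq : ∀ i ∈ I ^ 2, algebraMap A R i = 0) {θL θH : A}
    (hrel : algebraMap A R θL = θH • ℓ) (K : Ideal A) {a b : A}
    (h : (a, Ideal.Quotient.mk I b) ∈
      (I ^ 2) • (⊤ : Submodule A (A × (A ⧸ I)))
        ⊔ Submodule.span A {((θL, -(Ideal.Quotient.mk I θH)) : A × (A ⧸ I))}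
        ⊔ K • (⊤ : Submodule A (A × (A ⧸ I)))) :
    algebraMap A R a + b • ℓ ∈ K.map (algebraMap A R) := by
  set F := prodQuotientLift ℓ hℓ
  have hsq_map : (I ^ 2).map (algebraMap A R) ≤ K.map (algebraMap A R) :=
    Ideal.map_le_iff_le_comap.2 fun i hi => by simp [hsq i hi]
  have hrel_zero : F (θL, -(Ideal.Quotient.mk I θH)) = 0 := by
    rw [← map_neg, prodQuotientLift_apply_mk, hrel, neg_smul, add_neg_cancel]
  have hle : (I ^ 2) • (⊤ : Submodule A (A × (A ⧸ I)))
        ⊔ Submodule.span A {((θL, -(Ideal.Quotient.mk I θH)) : A × (A ⧸ I))}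
        ⊔ K • ⊤ ≤ ((K.map (algebraMap A R)).restrictScalars A).comap F := by
    refine sup_le (sup_le ?_ ?_) (smul_top_le_comap_map F K)
    · exact (smul_top_le_comap_map F _).trans (Submodule.comap_mono hsq_map)
    · simp [hrel_zero]
  exact hle h

end Ideal

theorem stmt_18_general {A : Type*} [CommRing A] (I_A : Ideal A) (ΘL ΘH : A)
    (p m : ℕ) (a b : A)
    (h : (a, Ideal.Quotient.mk I_A b) ∈
      ((I_A ^ 2) • (⊤ : Submodule A (A × (A ⧸ I_A)))
        ⊔ Submodule.span A {((ΘL, -(Ideal.Quotient.mk I_A ΘH)) : A × (A ⧸ I_A))}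
        ⊔ (Ideal.span {(p : A) ^ m}) • (⊤ : Submodule A (A × (A ⧸ I_A))))) :
    Ideal.Quotient.mk (Ideal.span
        ({X * C ΘH - C ΘL, X ^ 2} ∪ (fun t : A => X * C t) '' (I_A : Set A)
          ∪ C '' ((I_A ^ 2 : Ideal A) : Set A))) (C a + C b * X) ∈
      Ideal.span {Ideal.Quotient.mk (Ideal.span
        ({X * C ΘH - C ΘL, X ^ 2} ∪ (fun t : A => X * C t) '' (I_A : Set A)
          ∪ C '' ((I_A ^ 2 : Ideal A) : Set A))) (C ((p : A) ^ m))} := by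
  set J := Ideal.span ({X * C ΘH - C ΘL, X ^ 2} ∪ (fun t : A => X * C t) '' (I_A : Set A)
    ∪ C '' ((I_A ^ 2 : Ideal A) : Set A))
  have hC (x : A) : algebraMap A (A[X] ⧸ J) x = Ideal.Quotient.mk J (C x) := rfl
  have hsmul (x : A) : x • Ideal.Quotient.mk J X = Ideal.Quotient.mk J (C x * X) := by
    change Ideal.Quotient.mk J (x • X) = _
    rw [smul_eq_C_mul]
  have hℓ (i : A) (hi : i ∈ I_A) : i • Ideal.Quotient.mk J X = 0 := by
    rw [hsmul, mul_comm, Ideal.Quotient.eq_zero_iff_mem]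
    exact Ideal.subset_span (.inl (.inr ⟨i, hi, rfl⟩))
  have hsq (i : A) (hi : i ∈ I_A ^ 2) : algebraMap A (A[X] ⧸ J) i = 0 := by
    rw [hC, Ideal.Quotient.eq_zero_iff_mem]
    exact Ideal.subset_span (.inr ⟨i, hi, rfl⟩)
  have hrel : algebraMap A (A[X] ⧸ J) ΘL = ΘH • Ideal.Quotient.mk J X := by
    rw [hC, hsmul, eq_comm, ← sub_eq_zero, ← map_sub, mul_comm, Ideal.Quotient.eq_zero_iff_mem]
    exact Ideal.subset_span (.inl (.inl (.inl rfl)))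
  have hmem := Ideal.add_smul_mem_map_of_mem_sup hℓ hsq hrel _ h
  rw [Ideal.map_span, Set.image_singleton, Ideal.mem_span_singleton, hC, hC, hsmul,
    ← map_add] at hmem
  exact Ideal.mem_span_singleton.2 hmem

/-- Let `A` be a commutative ring with ideal `I_A`, `Λ = A ⊕ A/I_A`, `ΘL ∈ I_A`,
`ΘH ∈ A` a lift of `Θ_H ∈ A/I_A`, and
`J₀ = (I_A²·Λ, (ΘL, −ΘH), p^m·Λ) ⊆ Λ`.  If `(a, b mod I_A) ∈ J₀`, then in
`A_L^# = A[𝓛]/(𝓛·ΘH − ΘL, 𝓛·I_A, 𝓛², I_A²)` the element `a + b·𝓛` lies in the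
ideal `(p^m)`. -/
theorem stmt_18 {A : Type*} [CommRing A] (I_A : Ideal A) (ΘL ΘH : A)
    (hΘL : ΘL ∈ I_A) (p m : ℕ) (hp : p.Prime) (a b : A)
    (h : (a, Ideal.Quotient.mk I_A b) ∈
      ((I_A ^ 2) • (⊤ : Submodule A (A × (A ⧸ I_A)))
        ⊔ Submodule.span A {((ΘL, -(Ideal.Quotient.mk I_A ΘH)) : A × (A ⧸ I_A))}
        ⊔ (Ideal.span {(p : A) ^ m}) • (⊤ : Submodule A (A × (A ⧸ I_A))))) :
    Ideal.Quotient.mk (Ideal.span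
        ({X * C ΘH - C ΘL, X ^ 2} ∪ (fun t : A => X * C t) '' (I_A : Set A)
          ∪ C '' ((I_A ^ 2 : Ideal A) : Set A))) (C a + C b * X) ∈
      Ideal.span {Ideal.Quotient.mk (Ideal.span
        ({X * C ΘH - C ΘL, X ^ 2} ∪ (fun t : A => X * C t) '' (I_A : Set A)
          ∪ C '' ((I_A ^ 2 : Ideal A) : Set A))) (C ((p : A) ^ m))} :=
  stmt_18_general I_A ΘL ΘH p m a b h
end
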